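/- arXiv:2503.09845 — 4 statements merged into one kernel-verified Lean document; each statement's English description precedes it below -/
import Mathlib

section
/- Let A be a commutative ring and I1, I2, I3 finite index sets. Let R12 be an invertible square matrix over A indexed by I1 × I2, and let R13, R23 be square matrices indexed by I1 × I3 and I2 × I3 respectively. Let R̂12, R̂13, R̂23 denote the square matrices indexed by I1 × I2 × I3 that act as the given matrix on the indicated pair of tensor factors and as the identity on the remaining factor (for example (R̂13)_{(i,j,k),(i',j',k')} = (R13)_{(i,k),(i',k')} · δ_{j,j'}). Assume the quantum Yang–Baxter equation R̂12 · R̂13 · R̂23 = R̂23 · R̂13 · R̂12. Then the partial traces T1 and T2, which are the square matrices indexed by I3 defined by (T1)_{k,k'} = Σ_{i ∈ I1} (R13)_{(i,k),(i,k')} and (T2)_{k,k'} = Σ_{j ∈ I2} (R23)_{(j,k),(j,k')}, commute: T1 · T2 = T2 · T1. -/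
open Matrix

variable {A : Type*} [CommRing A]
variable {I1 I2 I3 : Type*} [Fintype I1] [Fintype I2] [Fintype I3]
  [DecidableEq I1] [DecidableEq I2] [DecidableEq I3]

/-- Lift of a matrix acting on tensor factors 1 and 2 to a matrix on the triple product,
acting as the identity on the third factor. -/
def lift12 (R : Matrix (I1 × I2) (I1 × I2) A) :
    Matrix (I1 × I2 × I3) (I1 × I2 × I3) A :=
  Matrix.of fun p q => R (p.1, p.2.1) (q.1, q.2.1) * (if p.2.2 = q.2.2 then 1 else 0)

/-- Lift of a matrix acting on tensor factors 1 and 3. -/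
def lift13 (R : Matrix (I1 × I3) (I1 × I3) A) :
    Matrix (I1 × I2 × I3) (I1 × I2 × I3) A :=
  Matrix.of fun p q => R (p.1, p.2.2) (q.1, q.2.2) * (if p.2.1 = q.2.1 then 1 else 0)

/-- Lift of a matrix acting on tensor factors 2 and 3. -/
def lift23 (R : Matrix (I2 × I3) (I2 × I3) A) :
    Matrix (I1 × I2 × I3) (I1 × I2 × I3) A :=
  Matrix.of fun p q => R p.2 q.2 * (if p.1 = q.1 then 1 else 0)

set_option linter.unusedSectionVars false

def ptr12 (M : Matrix (I1 × I2 × I3) (I1 × I2 × I3) A) : Matrix I3 I3 A :=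
  Matrix.of fun k k' => ∑ i : I1, ∑ j : I2, M (i, j, k) (i, j, k')

lemma lift12_one : lift12 (1 : Matrix (I1 × I2) (I1 × I2) A) = (1 : Matrix (I1 × I2 × I3) (I1 × I2 × I3) A) := by
  ext ⟨i, j, k⟩ ⟨i', j', k'⟩
  simp [lift12, one_apply, Prod.ext_iff]
  aesop

lemma lift12_mul (P Q : Matrix (I1 × I2) (I1 × I2) A) :
    lift12 (I3 := I3) (P * Q) = lift12 P * lift12 Q := by
  ext ⟨i, j, k⟩ ⟨i', j', k'⟩
  simp [lift12, mul_apply, Fintype.sum_prod_type, mul_ite, ite_mul, Finset.mul_sum]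

lemma ptr12_cyc (S : Matrix (I1 × I2) (I1 × I2) A)
    (M : Matrix (I1 × I2 × I3) (I1 × I2 × I3) A) :
    ptr12 (lift12 S * M) = ptr12 (M * lift12 S) := by
  have sum4 : ∀ f : I1 → I2 → I1 → I2 → A,
      ∑ i : I1, ∑ j : I2, ∑ a : I1, ∑ b : I2, f i j a b
        = ∑ a : I1, ∑ b : I2, ∑ i : I1, ∑ j : I2, f i j a b := fun f => by
    have := Finset.sum_comm (s := (Finset.univ : Finset (I1 × I2)))
      (t := (Finset.univ : Finset (I1 × I2))) (f := fun p q => f p.1 p.2 q.1 q.2)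
    simpa [Fintype.sum_prod_type] using this
  ext k k'
  simp only [ptr12, lift12, mul_apply, Matrix.of_apply, Fintype.sum_prod_type, ite_mul,
    mul_ite, mul_zero, zero_mul, mul_one, one_mul, Finset.sum_ite_eq, Finset.sum_ite_eq',
    Finset.mem_univ, if_true]
  rw [sum4]
  simp [mul_comm]

lemma ptr12_l13_l23 (R13 : Matrix (I1 × I3) (I1 × I3) A) (R23 : Matrix (I2 × I3) (I2 × I3) A) :
    ptr12 (lift13 (I2 := I2) R13 * lift23 (I1 := I1) R23)
      = (Matrix.of fun k k' : I3 => ∑ i : I1, R13 (i, k) (i, k')) *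
        (Matrix.of fun k k' : I3 => ∑ j : I2, R23 (j, k) (j, k')) := by
  ext k k'
  simp only [ptr12, lift13, lift23, mul_apply, Matrix.of_apply, Fintype.sum_prod_type, ite_mul,
    mul_ite, mul_zero, zero_mul, mul_one, one_mul, Finset.sum_ite_eq, Finset.sum_ite_eq',
    Finset.mem_univ, if_true, Finset.sum_mul, Finset.mul_sum, Finset.sum_ite_irrel, Finset.sum_const_zero]
  refine (Finset.sum_congr rfl fun i _ => Finset.sum_comm ..).trans ?_
  rw [Finset.sum_comm]
  exact Finset.sum_congr rfl fun c _ => Finset.sum_comm ..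

lemma ptr12_l23_l13 (R13 : Matrix (I1 × I3) (I1 × I3) A) (R23 : Matrix (I2 × I3) (I2 × I3) A) :
    ptr12 (lift23 (I1 := I1) R23 * lift13 (I2 := I2) R13)
      = (Matrix.of fun k k' : I3 => ∑ j : I2, R23 (j, k) (j, k')) *
        (Matrix.of fun k k' : I3 => ∑ i : I1, R13 (i, k) (i, k')) := by
  ext k k'
  simp only [ptr12, lift13, lift23, mul_apply, Matrix.of_apply, Fintype.sum_prod_type, ite_mul,
    mul_ite, mul_zero, zero_mul, mul_one, one_mul, Finset.sum_ite_eq, Finset.sum_ite_eq',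
    Finset.mem_univ, if_true, Finset.sum_mul, Finset.mul_sum, Finset.sum_ite_irrel, Finset.sum_const_zero]
  refine (Finset.sum_congr rfl fun i _ => Finset.sum_comm ..).trans ?_
  rw [Finset.sum_comm]

/-- If `R12, R13, R23` satisfy the quantum Yang-Baxter equation (with `R12` invertible),
then the partial traces `T1` (of `R13` over `I1`) and `T2` (of `R23` over `I2`) commute. -/
theorem partial_traces_commute
    (R12 : Matrix (I1 × I2) (I1 × I2) A)
    (R13 : Matrix (I1 × I3) (I1 × I3) A)
    (R23 : Matrix (I2 × I3) (I2 × I3) A)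
    (hR12 : IsUnit R12)
    (hYBE : lift12 (I3 := I3) R12 * lift13 (I2 := I2) R13 * lift23 (I1 := I1) R23
          = lift23 (I1 := I1) R23 * lift13 (I2 := I2) R13 * lift12 (I3 := I3) R12) :
    (Matrix.of fun k k' : I3 => ∑ i : I1, R13 (i, k) (i, k')) *
      (Matrix.of fun k k' : I3 => ∑ j : I2, R23 (j, k) (j, k')) =
    (Matrix.of fun k k' : I3 => ∑ j : I2, R23 (j, k) (j, k')) *
      (Matrix.of fun k k' : I3 => ∑ i : I1, R13 (i, k) (i, k')) := by
  obtain ⟨u, rfl⟩ := hR12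
  rw [← ptr12_l13_l23, ← ptr12_l23_l13]
  have key : lift13 (I2 := I2) R13 * lift23 (I1 := I1) R23
      = lift12 (I3 := I3) (↑u⁻¹ : Matrix (I1 × I2) (I1 × I2) A) *
        (lift23 (I1 := I1) R23 * lift13 (I2 := I2) R13 * lift12 (I3 := I3) (↑u)) := by
    rw [← hYBE, ← mul_assoc, ← mul_assoc, ← lift12_mul, Units.inv_mul, lift12_one, one_mul]
  rw [key, ptr12_cyc]
  rw [mul_assoc, mul_assoc, ← lift12_mul, Units.mul_inv, lift12_one, mul_one]
end

section
/- Let K be a field, d ≥ 1, and let G be a nonzero symmetric d × d matrix over K (the Gram matrix of a symmetric bilinear form B(x,y) = xᵀGy in a basis v_1, …, v_d). Let M_1, …, M_r be strictly lower triangular d × d matrices over K such that the smallest subspace of K^d containing the first standard basis vector e_1 and invariant under all the M_i is all of K^d (cyclicity of v_1 under the operators F_i with matrices M_i). Assume that for every i one has M_iᵀ G = G M_iᵀ (equivalently, the adjoint of the operator F_i with respect to the bilinear form equals the operator whose matrix in the given basis is the transpose of M_i). Then G = c · Id for some nonzero scalar c ∈ K, i.e. B(v_i, v_j) = c δ_{ij}.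 -/
open Matrix

/-- If a nonzero symmetric bilinear form with Gram matrix `G` makes each strictly lower
triangular operator `M i` satisfy "adjoint = transpose", and the first basis vector is
cyclic for the algebra generated by the `M i`, then the Gram matrix is a nonzero scalar
multiple of the identity, i.e. the basis is orthogonal with all vectors of equal nonzero
square length. -/
theorem gram_matrix_is_scalar {K : Type*} [Field K] {d r : ℕ} (hd : 1 ≤ d)
    (G : Matrix (Fin d) (Fin d) K) (hG : G ≠ 0) (hGsymm : G.transpose = G)
    (M : Fin r → Matrix (Fin d) (Fin d) K)
    (hlow : ∀ i, ∀ a b : Fin d, a ≤ b → M i a b = 0)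
    (hcyc : ∀ W : Submodule K (Fin d → K),
        (Pi.single (⟨0, hd⟩ : Fin d) (1 : K)) ∈ W →
        (∀ i, ∀ x ∈ W, (M i).mulVec x ∈ W) → W = ⊤)
    (hadj : ∀ i, (M i).transpose * G = G * (M i).transpose) :
    ∃ c : K, c ≠ 0 ∧ G = c • (1 : Matrix (Fin d) (Fin d) K) := by
  set z : Fin d := ⟨0, hd⟩ with hzdef
  have hz : ∀ b : Fin d, z ≤ b := fun b => by
    simp [hzdef, Fin.le_def]
  -- G commutes with each M i
  have hMG : ∀ i, M i * G = G * M i := by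
    intro i
    have := congrArg Matrix.transpose (hadj i)
    simpa [Matrix.transpose_mul, hGsymm] using this.symm
  -- the first column u of G is killed by each (M i)ᵀ
  set u : Fin d → K := G.mulVec (Pi.single z 1) with hudef
  have hMz : ∀ i (b : Fin d), M i z b = 0 := fun i b => hlow i z b (hz b)
  have hu0 : ∀ i, (M i).transpose.mulVec u = 0 := by
    intro i
    have h1 : (M i).transpose.mulVec u = ((M i).transpose * G).mulVec (Pi.single z 1) := by
      rw [hudef, Matrix.mulVec_mulVec]
    rw [h1, hadj i, ← Matrix.mulVec_mulVec]
    have : (M i).transpose.mulVec (Pi.single z 1) = 0 := by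
      funext a
      simp [Matrix.mulVec, dotProduct, Pi.single_apply, Matrix.transpose_apply, hMz i a]
    rw [this, Matrix.mulVec_zero]
  -- first invariant subspace: u ⬝ᵥ x = u z * x z
  let W₁ : Submodule K (Fin d → K) :=
    { carrier := {x | u ⬝ᵥ x = u z * x z}
      add_mem' := by
        intro a b ha hb
        simp only [Set.mem_setOf_eq] at *
        simp [dotProduct_add, ha, hb, mul_add]
      zero_mem' := by simp
      smul_mem' := by
        intro c x hx
        simp only [Set.mem_setOf_eq] at *
        simp [dotProduct_smul, hx]
        ring }
  have hW₁ : W₁ = ⊤ := by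
    apply hcyc
    · have : u ⬝ᵥ (Pi.single z (1:K)) = u z * ((Pi.single z (1:K) : Fin d → K) z) := by simp
      exact this
    · intro i x hx
      show u ⬝ᵥ (M i).mulVec x = u z * ((M i).mulVec x) z
      have h1 : u ⬝ᵥ (M i).mulVec x = ((M i).transpose.mulVec u) ⬝ᵥ x := by
        rw [Matrix.dotProduct_mulVec, Matrix.mulVec_transpose]
      have h2 : ((M i).mulVec x) z = 0 := by
        simp [Matrix.mulVec, dotProduct, hMz i]
      rw [h1, hu0 i, h2, mul_zero, zero_dotProduct]
  have hmem₁ : ∀ x : Fin d → K, u ⬝ᵥ x = u z * x z := by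
    intro x
    have : x ∈ W₁ := hW₁ ▸ Submodule.mem_top
    exact this
  -- hence u a = 0 for a ≠ z, and u z = G z z
  set c : K := G z z with hcdef
  have huz : u z = c := by
    show (G.mulVec (Pi.single z 1)) z = G z z
    rw [Matrix.mulVec_single]
    exact mul_one _
  have hucol : u = c • (Pi.single z 1 : Fin d → K) := by
    funext a
    have := hmem₁ (Pi.single a 1)
    rw [dotProduct_single, mul_one] at this
    rcases eq_or_ne a z with h | h
    · rw [h, Pi.smul_apply, Pi.single_eq_same, smul_eq_mul, mul_one, huz]
    · rw [Pi.smul_apply, Pi.single_eq_of_ne h, smul_eq_mul, mul_zero, this,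
        Pi.single_eq_of_ne (Ne.symm h), mul_zero]
  -- second invariant subspace: G x = c x
  let W₂ : Submodule K (Fin d → K) :=
    { carrier := {x | G.mulVec x = c • x}
      add_mem' := by
        intro a b ha hb
        simp only [Set.mem_setOf_eq] at *
        simp [Matrix.mulVec_add, ha, hb, smul_add]
      zero_mem' := by simp
      smul_mem' := by
        intro t x hx
        simp only [Set.mem_setOf_eq] at *
        rw [Matrix.mulVec_smul, hx, smul_comm] }
  have hW₂ : W₂ = ⊤ := by
    apply hcyc
    · have : G.mulVec (Pi.single z (1:K)) = c • (Pi.single z 1 : Fin d → K) := by rw [← hudef, hucol]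
      exact this
    · intro i x hx
      show G.mulVec ((M i).mulVec x) = c • (M i).mulVec x
      have hx' : G.mulVec x = c • x := hx
      rw [Matrix.mulVec_mulVec, ← hMG i, ← Matrix.mulVec_mulVec, hx', Matrix.mulVec_smul]
  have hGx : ∀ x : Fin d → K, G.mulVec x = c • x := by
    intro x
    have : x ∈ W₂ := hW₂ ▸ Submodule.mem_top
    exact this
  have hGc : G = c • (1 : Matrix (Fin d) (Fin d) K) := by
    ext a b
    have := congrFun (hGx (Pi.single b 1)) a
    simp [Matrix.mulVec_single, Pi.single_apply, Matrix.one_apply] at this ⊢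
    rcases eq_or_ne a b with h | h <;> simp [h] at this ⊢ <;> simp [this]
  refine ⟨c, ?_, hGc⟩
  intro hc
  apply hG
  rw [hGc, hc, zero_smul]
end

section
/- Let K, s, t, q and the G₂ trigonometric R-matrix Ř_{G₂}(z) on K⁷ ⊗ K⁷ be as in the context, with q − q⁻¹z ≠ 0, q⁴ − q⁻⁴z ≠ 0 and q⁶ − q⁻⁶z ≠ 0. Let τ ∈ End(K⁷) be the permutation operator e_i ↦ e_{8−i}, and let P ∈ End(K⁷ ⊗ K⁷) be the flip x⊗y ↦ y⊗x (i.e. P = Σ_{i,j} E_{ij}⊗E_{ji}). Then Ř_{G₂}(z) = (τ⊗τ) · P · Ř_{G₂}(z) · P · (τ⊗τ). -/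
open Matrix Kronecker

variable {K : Type*} [Field K]

/-- The A-type trigonometric R-matrix `Ř_n(z;q)` on `K^n ⊗ K^n`. -/
noncomputable def Amat (n : ℕ) (q z : K) :
    Matrix (Fin n × Fin n) (Fin n × Fin n) K :=
  (∑ i : Fin n, Matrix.single i i (1 : K) ⊗ₖ Matrix.single i i (1 : K))
    + (z * (q - q⁻¹) / (q - q⁻¹ * z)) •
        ∑ i : Fin n, ∑ j : Fin n,
          if i < j then Matrix.single i i (1 : K) ⊗ₖ Matrix.single j j (1 : K) else 0
    + ((q - q⁻¹) / (q - q⁻¹ * z)) •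
        ∑ i : Fin n, ∑ j : Fin n,
          if j < i then Matrix.single i i (1 : K) ⊗ₖ Matrix.single j j (1 : K) else 0
    + ((1 - z) / (q - q⁻¹ * z)) •
        ∑ i : Fin n, ∑ j : Fin n,
          if i ≠ j then Matrix.single i j (1 : K) ⊗ₖ Matrix.single j i (1 : K) else 0

/-- The bar involution `ī = 8 - i` on `Fin 7` (0-based version). -/
def barG (i : Fin 7) : Fin 7 := ⟨6 - (i : ℕ), by omega⟩

/-- The vector `p = (q⁵, −q⁴, q, −1, q⁻¹, −q⁻⁴, q⁻⁵)`. -/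
noncomputable def pG (q : K) : Fin 7 → K :=
  ![q ^ (5 : ℤ), -q ^ (4 : ℤ), q, -1, q ^ (-1 : ℤ), -q ^ (-4 : ℤ), q ^ (-5 : ℤ)]

/-- The G₂ correction term `Q(z)`. -/
noncomputable def QG (q z : K) : Matrix (Fin 7 × Fin 7) (Fin 7 × Fin 7) K :=
  (z * q ^ (-6 : ℤ)) •
      (∑ i : Fin 7, ∑ j : Fin 7,
        if (i : ℕ) + (j : ℕ) < 6 then
          (pG q i * pG q j) •
            (Matrix.single i j (1 : K) ⊗ₖ Matrix.single (barG i) (barG j) (1 : K))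
        else 0)
    + q ^ (6 : ℤ) •
      (∑ i : Fin 7, ∑ j : Fin 7,
        if 6 < (i : ℕ) + (j : ℕ) then
          (pG q i * pG q j) •
            (Matrix.single i j (1 : K) ⊗ₖ Matrix.single (barG i) (barG j) (1 : K))
        else 0)
    + ((q ^ (7 : ℤ) - q ^ (5 : ℤ) + q ^ (4 : ℤ)
          + (q ^ (-4 : ℤ) - q ^ (-5 : ℤ) + q ^ (-7 : ℤ)) * z) / (q ^ (2 : ℤ) + q ^ (-2 : ℤ))) •
      (Matrix.single (3 : Fin 7) (3 : Fin 7) (1 : K) ⊗ₖ Matrix.single (3 : Fin 7) (3 : Fin 7) (1 : K))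
    + ((q ^ (4 : ℤ) + q ^ (-4 : ℤ) * z) / (q ^ (2 : ℤ) + q ^ (-2 : ℤ))) •
      (∑ i : Fin 7, ∑ j : Fin 7,
        if (i : ℕ) + (j : ℕ) = 6 ∧ i ≠ (3 : Fin 7) then
          (pG q i * pG q j) •
            (Matrix.single i j (1 : K) ⊗ₖ Matrix.single (barG i) (barG j) (1 : K))
        else 0)

/-- The seven ordered index lists `I_s` together with the coefficients `μ^s`
(0-based indices; `q = s²` and `t` plays the role of `√[2]`). -/
noncomputable def G2lists (s t : K) : Fin 7 → List ((Fin 7 × Fin 7) × K) :=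
  ![[((0, 3), s ^ 6), ((1, 2), -(s ^ 3 * t)), ((2, 1), s⁻¹ ^ 3 * t), ((3, 0), -(s⁻¹ ^ 6))],
    [((0, 4), s ^ 5 * t), ((1, 3), -(s ^ 2)), ((3, 1), s⁻¹ ^ 2), ((4, 0), -(s⁻¹ ^ 5 * t))],
    [((0, 5), s ^ 5 * t), ((2, 3), -(s ^ 2)), ((3, 2), s⁻¹ ^ 2), ((5, 0), -(s⁻¹ ^ 5 * t))],
    [((0, 6), s ^ 4), ((1, 5), s ^ 6), ((2, 4), -1), ((3, 3), -(s ^ 2 - s⁻¹ ^ 2)), ((4, 2), 1),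
      ((5, 1), -(s⁻¹ ^ 6)), ((6, 0), -(s⁻¹ ^ 4))],
    [((1, 6), s ^ 5 * t), ((3, 4), -(s ^ 2)), ((4, 3), s⁻¹ ^ 2), ((6, 1), -(s⁻¹ ^ 5 * t))],
    [((2, 6), s ^ 5 * t), ((3, 5), -(s ^ 2)), ((5, 3), s⁻¹ ^ 2), ((6, 2), -(s⁻¹ ^ 5 * t))],
    [((3, 6), s ^ 6), ((4, 5), -(s ^ 3 * t)), ((5, 4), s⁻¹ ^ 3 * t), ((6, 3), -(s⁻¹ ^ 6))]]

/-- The coefficient `c(P,P')` entering `S(z)`: it depends on the 1-based positions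
`p1+1, p2+1` of the pairs, the length `n` of the list, and the pair `ik = (i,k)` of `P`. -/
noncomputable def g2coef (s z : K) (n p1 p2 : ℕ) (ik : Fin 7 × Fin 7) : K :=
  if p1 + p2 + 2 < n + 1 then z * (s ^ 2) ^ (-4 : ℤ)
  else if n + 1 < p1 + p2 + 2 then (s ^ 2) ^ (4 : ℤ)
  else if ik.1 = (3 : Fin 7) ∨ ik.2 = (3 : Fin 7) ∨ (ik.1 : ℕ) + (ik.2 : ℕ) = 6 then
    (s ^ (7 : ℤ) + s ^ (-7 : ℤ) * z) / (s + s⁻¹)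
  else ((s ^ 2) ^ (3 : ℤ) + (s ^ 2) ^ (-3 : ℤ) * z) / (s ^ 2 + (s ^ 2)⁻¹)

/-- The G₂ correction term `S(z)`. -/
noncomputable def SG (s t z : K) : Matrix (Fin 7 × Fin 7) (Fin 7 × Fin 7) K :=
  ∑ k : Fin 7,
    (((G2lists s t k).zipIdx.map Prod.swap).map fun P =>
      (((G2lists s t k).zipIdx.map Prod.swap).map fun P' =>
        (g2coef s z (G2lists s t k).length P.1 P'.1 P.2.1 * P.2.2 * P'.2.2) •
          (Matrix.single P.2.1.1 P'.2.1.1 (1 : K) ⊗ₖ Matrix.single P.2.1.2 P'.2.1.2 (1 : K))).sum).sum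

/-- The G₂ trigonometric R-matrix `Ř_{G₂}(z)` on `K⁷ ⊗ K⁷` (with `q = s²`). -/
noncomputable def RG2 (s t z : K) : Matrix (Fin 7 × Fin 7) (Fin 7 × Fin 7) K :=
  Amat 7 (s ^ 2) z
    + ((s ^ 2 - (s ^ 2)⁻¹) * (1 - z) /
        ((s ^ 2 - (s ^ 2)⁻¹ * z) * ((s ^ 2) ^ (4 : ℤ) - (s ^ 2) ^ (-4 : ℤ) * z))) • SG s t z
    - ((s ^ 2 - (s ^ 2)⁻¹) * ((s ^ 2) ^ (2 : ℤ) + (s ^ 2) ^ (-2 : ℤ)) * (1 - z) /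
        ((s ^ 2 - (s ^ 2)⁻¹ * z) * ((s ^ 2) ^ (6 : ℤ) - (s ^ 2) ^ (-6 : ℤ) * z))) • QG (s ^ 2) z

namespace G2aux

lemma barG_barG (i : Fin 7) : barG (barG i) = i := by
  simp only [barG]; ext; simp; omega
lemma barG_eq_iff {i j : Fin 7} : barG i = j ↔ i = barG j := by
  constructor <;> rintro rfl <;> rw [barG_barG]
lemma barG_lt {i j : Fin 7} : barG i < barG j ↔ j < i := by
  simp only [barG, Fin.lt_def]; simp; omega
lemma barG_inj {i j : Fin 7} : barG i = barG j ↔ i = j := by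
  rw [barG_eq_iff, barG_barG]

def barPerm : Equiv.Perm (Fin 7) := Function.Involutive.toPerm barG barG_barG

lemma sum_bar {β : Type*} [AddCommMonoid β] (f : Fin 7 → β) :
    ∑ i, f (barG i) = ∑ i, f i :=
  Fintype.sum_equiv barPerm _ _ fun _ => rfl

lemma sum2_swap_bar {β : Type*} [AddCommMonoid β] (f : Fin 7 → Fin 7 → β) :
    ∑ i, ∑ j, f (barG j) (barG i) = ∑ i, ∑ j, f i j := by
  rw [Finset.sum_comm]
  exact Fintype.sum_equiv barPerm _ _ fun j => Fintype.sum_equiv barPerm _ _ fun i => rfl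

noncomputable def tauG : Matrix (Fin 7) (Fin 7) K :=
  ∑ i : Fin 7, Matrix.single (barG i) i (1 : K)
noncomputable def PF : Matrix (Fin 7 × Fin 7) (Fin 7 × Fin 7) K :=
  ∑ i : Fin 7, ∑ j : Fin 7, Matrix.single i j (1 : K) ⊗ₖ Matrix.single j i (1 : K)

lemma tauG_apply (i j : Fin 7) : (tauG : Matrix (Fin 7) (Fin 7) K) i j = if i = barG j then 1 else 0 := by
  rw [tauG, Matrix.sum_apply]
  rw [Finset.sum_eq_single j]
  · simp [Matrix.single, eq_comm, barG_eq_iff, and_comm]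
  · intro b _ hb
    apply Matrix.single_apply_of_ne
    rintro ⟨-, rfl⟩; exact hb rfl
  · simp

lemma PF_apply (a b : Fin 7 × Fin 7) :
    (PF : Matrix (Fin 7 × Fin 7) (Fin 7 × Fin 7) K) a b
      = if a.1 = b.2 ∧ a.2 = b.1 then 1 else 0 := by
  rcases a with ⟨a1,a2⟩; rcases b with ⟨b1,b2⟩
  simp [PF, Matrix.sum_apply, Matrix.single, ite_and, eq_comm]

lemma TT_apply (a b : Fin 7 × Fin 7) :
    ((tauG ⊗ₖ tauG : Matrix (Fin 7 × Fin 7) (Fin 7 × Fin 7) K)) a b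
      = if a.1 = barG b.1 ∧ a.2 = barG b.2 then 1 else 0 := by
  rcases a with ⟨a1,a2⟩; rcases b with ⟨b1,b2⟩
  simp only [kroneckerMap_apply, tauG_apply, ite_and]
  split_ifs <;> simp_all

lemma TT_mul (M : Matrix (Fin 7 × Fin 7) (Fin 7 × Fin 7) K) (a b : Fin 7 × Fin 7) :
    ((tauG ⊗ₖ tauG : Matrix (Fin 7 × Fin 7) (Fin 7 × Fin 7) K) * M) a b
      = M (barG a.1, barG a.2) b := by
  rw [Matrix.mul_apply]
  rw [Finset.sum_eq_single ((barG a.1, barG a.2) : Fin 7 × Fin 7)]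
  · simp [tauG_apply, TT_apply, barG_barG]
  · intro c _ hc
    rw [TT_apply, if_neg, zero_mul]
    rintro ⟨h1, h2⟩
    exact hc (Prod.ext_iff.2 ⟨by simp [h1, barG_barG], by simp [h2, barG_barG]⟩)
  · simp

lemma mul_TT (M : Matrix (Fin 7 × Fin 7) (Fin 7 × Fin 7) K) (a b : Fin 7 × Fin 7) :
    (M * (tauG ⊗ₖ tauG : Matrix (Fin 7 × Fin 7) (Fin 7 × Fin 7) K)) a b
      = M a (barG b.1, barG b.2) := by
  rw [Matrix.mul_apply]
  rw [Finset.sum_eq_single ((barG b.1, barG b.2) : Fin 7 × Fin 7)]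
  · simp [tauG_apply, TT_apply, barG_barG]
  · intro c _ hc
    rw [TT_apply, if_neg, mul_zero]
    rintro ⟨h1, h2⟩
    exact hc (Prod.ext_iff.2 ⟨h1, h2⟩)
  · simp

lemma PF_mul (M : Matrix (Fin 7 × Fin 7) (Fin 7 × Fin 7) K) (a b : Fin 7 × Fin 7) :
    ((PF : Matrix (Fin 7 × Fin 7) (Fin 7 × Fin 7) K) * M) a b = M (a.2, a.1) b := by
  rw [Matrix.mul_apply]
  rw [Finset.sum_eq_single ((a.2, a.1) : Fin 7 × Fin 7)]
  · simp [PF_apply]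
  · intro c _ hc
    rw [PF_apply, if_neg, zero_mul]
    rintro ⟨h1, h2⟩
    exact hc (Prod.ext_iff.2 ⟨h2.symm, h1.symm⟩)
  · simp

lemma mul_PF (M : Matrix (Fin 7 × Fin 7) (Fin 7 × Fin 7) K) (a b : Fin 7 × Fin 7) :
    (M * (PF : Matrix (Fin 7 × Fin 7) (Fin 7 × Fin 7) K)) a b = M a (b.2, b.1) := by
  rw [Matrix.mul_apply]
  rw [Finset.sum_eq_single ((b.2, b.1) : Fin 7 × Fin 7)]
  · simp [PF_apply]
  · intro c _ hc
    rw [PF_apply, if_neg, mul_zero]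
    rintro ⟨h1, h2⟩
    exact hc (Prod.ext_iff.2 ⟨h1, h2⟩)
  · simp

/-- conjugation by `(τ⊗τ)·P` as a linear map. -/
noncomputable def conjL : Matrix (Fin 7 × Fin 7) (Fin 7 × Fin 7) K →ₗ[K] Matrix (Fin 7 × Fin 7) (Fin 7 × Fin 7) K where
  toFun M := (tauG ⊗ₖ tauG) * PF * M * PF * (tauG ⊗ₖ tauG)
  map_add' M N := by simp only [Matrix.mul_add, Matrix.add_mul]
  map_smul' c M := by simp only [Matrix.mul_smul, Matrix.smul_mul, RingHom.id_apply]

lemma conjL_apply (M : Matrix (Fin 7 × Fin 7) (Fin 7 × Fin 7) K) (a b : Fin 7 × Fin 7) :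
    conjL M a b = M (barG a.2, barG a.1) (barG b.2, barG b.1) := by
  show ((tauG ⊗ₖ tauG) * PF * M * PF * (tauG ⊗ₖ tauG) : Matrix (Fin 7 × Fin 7) (Fin 7 × Fin 7) K) a b = _
  rw [mul_TT, mul_PF,
    show ((tauG ⊗ₖ tauG) * PF * M : Matrix (Fin 7 × Fin 7) (Fin 7 × Fin 7) K)
      = (tauG ⊗ₖ tauG) * (PF * M) from mul_assoc _ _ _, TT_mul, PF_mul]

lemma conj_std (a b c d : Fin 7) :
    conjL (Matrix.single a b (1 : K) ⊗ₖ Matrix.single c d (1 : K))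
      = Matrix.single (barG c) (barG d) (1 : K) ⊗ₖ Matrix.single (barG a) (barG b) (1 : K) := by
  ext x y
  rw [conjL_apply]
  rcases x with ⟨x1, x2⟩; rcases y with ⟨y1, y2⟩
  simp only [kroneckerMap_apply, Matrix.single, Matrix.of_apply]
  simp only [show ∀ i j : Fin 7, (i = barG j) ↔ (barG i = j) from fun i j => barG_eq_iff.symm]
  exact mul_comm _ _

lemma conj_ite (p : Prop) [Decidable p] (M : Matrix (Fin 7 × Fin 7) (Fin 7 × Fin 7) K) :
    conjL (if p then M else 0) = if p then conjL M else 0 := by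
  split_ifs <;> simp

end G2aux

namespace G2aux

lemma conj_sum_lt (C : Matrix (Fin 7 × Fin 7) (Fin 7 × Fin 7) K) (hC : conjL C = C) :
    conjL (∑ i : Fin 7, ∑ j : Fin 7,
        if i < j then Matrix.single i i (1 : K) ⊗ₖ Matrix.single j j (1 : K) else C)
      = ∑ i : Fin 7, ∑ j : Fin 7,
        if i < j then Matrix.single i i (1 : K) ⊗ₖ Matrix.single j j (1 : K) else C := by
  calc conjL (∑ i : Fin 7, ∑ j : Fin 7,
        if i < j then Matrix.single i i (1 : K) ⊗ₖ Matrix.single j j (1 : K) else C)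
      = ∑ i : Fin 7, ∑ j : Fin 7, (if barG j < barG i then
          Matrix.single (barG j) (barG j) (1 : K) ⊗ₖ Matrix.single (barG i) (barG i) (1 : K)
        else C) := by
        rw [map_sum]
        refine Finset.sum_congr rfl fun i _ => ?_
        rw [map_sum]
        refine Finset.sum_congr rfl fun j _ => ?_
        rw [apply_ite conjL, conj_std, hC]
        exact if_congr (Iff.symm barG_lt) rfl rfl
    _ = _ := sum2_swap_bar fun a b =>
        if a < b then Matrix.single a a (1 : K) ⊗ₖ Matrix.single b b (1 : K) else C

lemma conj_sum_gt (C : Matrix (Fin 7 × Fin 7) (Fin 7 × Fin 7) K) (hC : conjL C = C) :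
    conjL (∑ i : Fin 7, ∑ j : Fin 7,
        if j < i then Matrix.single i i (1 : K) ⊗ₖ Matrix.single j j (1 : K) else C)
      = ∑ i : Fin 7, ∑ j : Fin 7,
        if j < i then Matrix.single i i (1 : K) ⊗ₖ Matrix.single j j (1 : K) else C := by
  calc conjL (∑ i : Fin 7, ∑ j : Fin 7,
        if j < i then Matrix.single i i (1 : K) ⊗ₖ Matrix.single j j (1 : K) else C)
      = ∑ i : Fin 7, ∑ j : Fin 7, (if barG i < barG j then
          Matrix.single (barG j) (barG j) (1 : K) ⊗ₖ Matrix.single (barG i) (barG i) (1 : K)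
        else C) := by
        rw [map_sum]
        refine Finset.sum_congr rfl fun i _ => ?_
        rw [map_sum]
        refine Finset.sum_congr rfl fun j _ => ?_
        rw [apply_ite conjL, conj_std, hC]
        exact if_congr (Iff.symm barG_lt) rfl rfl
    _ = _ := sum2_swap_bar fun a b =>
        if b < a then Matrix.single a a (1 : K) ⊗ₖ Matrix.single b b (1 : K) else C

lemma conj_A1 : conjL (∑ i : Fin 7, Matrix.single i i (1 : K) ⊗ₖ Matrix.single i i (1 : K))
    = ∑ i : Fin 7, Matrix.single i i (1 : K) ⊗ₖ Matrix.single i i (1 : K) := by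
  rw [map_sum]
  simp only [conj_std]
  exact sum_bar fun i => Matrix.single i i (1 : K) ⊗ₖ Matrix.single i i (1 : K)

lemma conj_A4 : conjL (∑ i : Fin 7, ∑ j : Fin 7,
      if i ≠ j then Matrix.single i j (1 : K) ⊗ₖ Matrix.single j i (1 : K) else 0)
    = ∑ i : Fin 7, ∑ j : Fin 7,
      if i ≠ j then Matrix.single i j (1 : K) ⊗ₖ Matrix.single j i (1 : K) else 0 := by
  calc conjL (∑ i : Fin 7, ∑ j : Fin 7,
        if i ≠ j then Matrix.single i j (1 : K) ⊗ₖ Matrix.single j i (1 : K) else 0)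
      = ∑ i : Fin 7, ∑ j : Fin 7, (if barG j ≠ barG i then
          Matrix.single (barG j) (barG i) (1 : K) ⊗ₖ Matrix.single (barG i) (barG j) (1 : K)
        else 0) := by
        rw [map_sum]
        refine Finset.sum_congr rfl fun i _ => ?_
        rw [map_sum]
        refine Finset.sum_congr rfl fun j _ => ?_
        rw [apply_ite conjL, conj_std, map_zero]
        refine if_congr ?_ rfl rfl
        rw [ne_eq, ne_eq, barG_inj, eq_comm]
    _ = _ := sum2_swap_bar fun a b =>
        if a ≠ b then Matrix.single a b (1 : K) ⊗ₖ Matrix.single b a (1 : K) else 0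

lemma conj_Amat (q z : K) : conjL (Amat 7 q z) = Amat 7 q z := by
  rw [Amat, map_add, _root_.map_smul, conj_A1]
  congr 2
  apply conj_sum_lt
  rw [map_add, map_zero, _root_.map_smul]
  congr 2
  apply conj_sum_gt
  rw [map_add, map_zero, _root_.map_smul, conj_A4]

lemma conj_QG (q z : K) : conjL (QG q z) = QG q z := by
  have key : ∀ (p : Prop) [Decidable p] (i j : Fin 7) (c : K),
      conjL (if p then c • (Matrix.single i j (1 : K) ⊗ₖ
          Matrix.single (barG i) (barG j) (1 : K)) else 0)
        = if p then c • (Matrix.single i j (1 : K) ⊗ₖ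
          Matrix.single (barG i) (barG j) (1 : K)) else 0 := by
    intro p _ i j c
    rw [conj_ite, _root_.map_smul, conj_std, barG_barG, barG_barG]
  have h33 : conjL (Matrix.single (3 : Fin 7) (3 : Fin 7) (1 : K) ⊗ₖ
        Matrix.single (3 : Fin 7) (3 : Fin 7) (1 : K))
      = Matrix.single (3 : Fin 7) (3 : Fin 7) (1 : K) ⊗ₖ
        Matrix.single (3 : Fin 7) (3 : Fin 7) (1 : K) := by
    rw [conj_std]; rfl
  rw [QG]
  simp only [map_add, _root_.map_smul, map_sum, key, h33]

lemma conj_SG_inner (s t z : K) (k : Fin 7) :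
    conjL ((G2lists s t k).zipIdx.map Prod.swap |>.map fun P =>
      ((G2lists s t k).zipIdx.map Prod.swap |>.map fun P' =>
        (g2coef s z (G2lists s t k).length P.1 P'.1 P.2.1 * P.2.2 * P'.2.2) •
          (Matrix.single P.2.1.1 P'.2.1.1 (1 : K) ⊗ₖ Matrix.single P.2.1.2 P'.2.1.2 (1 : K))).sum).sum
    = ((G2lists s t (barPerm k)).zipIdx.map Prod.swap |>.map fun P =>
      ((G2lists s t (barPerm k)).zipIdx.map Prod.swap |>.map fun P' =>
        (g2coef s z (G2lists s t (barPerm k)).length P.1 P'.1 P.2.1 * P.2.2 * P'.2.2) •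
          (Matrix.single P.2.1.1 P'.2.1.1 (1 : K) ⊗ₖ Matrix.single P.2.1.2 P'.2.1.2 (1 : K))).sum).sum := by
  simp only [map_list_sum, List.map_map, Function.comp_def, _root_.map_smul, conj_std]
  fin_cases k <;> rfl

lemma conj_SG (s t z : K) : conjL (SG s t z) = SG s t z := by
  rw [SG, map_sum]
  exact Fintype.sum_equiv barPerm _ _ fun k => conj_SG_inner s t z k

end G2aux


/-- The G₂ trigonometric R-matrix is invariant under conjugation by `(τ⊗τ)·P`, where
`τ : e_i ↦ e_{8−i}` and `P` is the flip. -/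
theorem G2_flip_symmetry (s t z : K)
    (hs : s ≠ 0) (ht : t ≠ 0) (hT : t ^ 2 = s ^ 2 + (s ^ 2)⁻¹)
    (hden0 : s + s⁻¹ ≠ 0) (hden1 : s ^ 2 + (s ^ 2)⁻¹ ≠ 0)
    (hden2 : (s ^ 2) ^ (2 : ℤ) + (s ^ 2) ^ (-2 : ℤ) ≠ 0)
    (hz1 : s ^ 2 - (s ^ 2)⁻¹ * z ≠ 0)
    (hz2 : (s ^ 2) ^ (4 : ℤ) - (s ^ 2) ^ (-4 : ℤ) * z ≠ 0)
    (hz3 : (s ^ 2) ^ (6 : ℤ) - (s ^ 2) ^ (-6 : ℤ) * z ≠ 0) :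
    let τ : Matrix (Fin 7) (Fin 7) K := ∑ i : Fin 7, Matrix.single (barG i) i (1 : K)
    let P : Matrix (Fin 7 × Fin 7) (Fin 7 × Fin 7) K :=
      ∑ i : Fin 7, ∑ j : Fin 7, Matrix.single i j (1 : K) ⊗ₖ Matrix.single j i (1 : K)
    RG2 s t z = (τ ⊗ₖ τ) * P * RG2 s t z * P * (τ ⊗ₖ τ) := by
  intro tau P
  have e : (tau ⊗ₖ tau) * P * RG2 s t z * P * (tau ⊗ₖ tau) = G2aux.conjL (RG2 s t z) := rfl
  rw [e, RG2]
  simp only [map_sub, map_add, _root_.map_smul]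
  rw [G2aux.conj_Amat, G2aux.conj_SG, G2aux.conj_QG]
end

section
/- For every commutative ring A and every u ∈ A, the 3×3 matrix f_{ω1}(u) = [[60+44u+15u²+u³, −6u, −6u], [−300u, 60, −u(4−u)(11−u)], [−300u, −u(4−u)(11−u), 60]] (the matrix governing the L_{ω1}-isotypic block of the rational E₈ R-matrix) satisfies f_{ω1}(u) · f_{ω1}(−u) = (1−u²)(36−u²)(100−u²) · Id₃. -/
open Matrix

/-- The 3×3 matrix governing the `L_{ω1}`-isotypic block of the rational E₈ R-matrix. -/
def fom1E8rat {A : Type*} [CommRing A] (u : A) : Matrix (Fin 3) (Fin 3) A :=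
  !![60 + 44 * u + 15 * u ^ 2 + u ^ 3, -(6 * u), -(6 * u);
     -(300 * u), 60, -(u * (4 - u) * (11 - u));
     -(300 * u), -(u * (4 - u) * (11 - u)), 60]

/-- Unitarity of the rational E₈ R-matrix on the `L_{ω1}`-isotypic block. -/
theorem E8_om1_rational_unitarity {A : Type*} [CommRing A] (u : A) :
    fom1E8rat u * fom1E8rat (-u)
      = ((1 - u ^ 2) * (36 - u ^ 2) * (100 - u ^ 2)) • (1 : Matrix (Fin 3) (Fin 3) A) := by
  unfold fom1E8rat
  ext i j
  fin_cases i <;> fin_cases j <;>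
    simp [Matrix.mul_apply, Fin.sum_univ_succ, Matrix.one_apply] <;> ring
end
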